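/- If w : ℝ³ → ℝ³ is a C¹ divergence-free vector field such that both w and x ↦ |x| w(x) are integrable, then for each i ∈ {1,2,3}, ∫_{ℝ³} w_i(x) dx = 0. -/

import Mathlib

/-!
Since `div (xᵢ w) = wᵢ + xᵢ div w = wᵢ`, it suffices that the divergence of an integrable `C¹`
field `u` with integrable divergence has integral zero. Integrating by parts against the cutoff
`φ (x / R)` moves the derivatives onto the cutoff, whose gradient is `O(1 / R)`, so
`∫ φ (x / R) div u = O(‖u‖₁ / R)`; by dominated convergence the left side tends to `∫ div u`.
-/

open Real MeasureTheory Filter Topology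

section Cutoff

variable {E : Type*} [NormedAddCommGroup E] [NormedSpace ℝ E] [FiniteDimensional ℝ E]

noncomputable def unitBump : ContDiffBump (0 : E) := ⟨1, 2, one_pos, one_lt_two⟩

noncomputable def cutoff (R : ℝ) (x : E) : ℝ := (unitBump : ContDiffBump (0 : E)) (R⁻¹ • x)

theorem contDiff_cutoff {n : ℕ∞} (R : ℝ) : ContDiff ℝ n (cutoff (E := E) R) :=
  unitBump.contDiff.comp (contDiff_const_smul R⁻¹)

theorem cutoff_nonneg (R : ℝ) (x : E) : 0 ≤ cutoff R x := unitBump.nonneg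

theorem cutoff_le_one (R : ℝ) (x : E) : cutoff R x ≤ 1 := unitBump.le_one

theorem eventually_cutoff_eq_one (x : E) : ∀ᶠ R in atTop, cutoff R x = 1 := by
  filter_upwards [eventually_ge_atTop ‖x‖, eventually_gt_atTop 0] with R hxR hR
  refine unitBump.one_of_mem_closedBall ?_
  rw [Metric.mem_closedBall, dist_zero_right, norm_smul, norm_inv, norm_of_nonneg hR.le]
  exact inv_mul_le_one_of_le₀ hxR hR.le

theorem hasCompactSupport_cutoff {R : ℝ} (hR : R ≠ 0) :
    HasCompactSupport (cutoff (E := E) R) :=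
  unitBump.hasCompactSupport.comp_homeomorph (Homeomorph.smulOfNeZero R⁻¹ (inv_ne_zero hR))

theorem exists_norm_fderiv_cutoff_le :
    ∃ C, ∀ (R : ℝ) (x : E), ‖fderiv ℝ (cutoff R) x‖ ≤ C * |R|⁻¹ := by
  let φ : ContDiffBump (0 : E) := unitBump
  obtain ⟨C, hC⟩ := (φ.hasCompactSupport.fderiv ℝ).exists_bound_of_continuous
    (φ.contDiff.continuous_fderiv one_ne_zero)
  refine ⟨C, fun R x => ?_⟩
  have hderiv : HasFDerivAt (cutoff R) ((fderiv ℝ φ (R⁻¹ • x)).comp (R⁻¹ • .id ℝ E)) x :=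
    (φ.contDiff.differentiable one_ne_zero _).hasFDerivAt.comp x
      ((hasFDerivAt_id x).const_smul R⁻¹)
  calc ‖fderiv ℝ (cutoff R) x‖
      ≤ ‖fderiv ℝ φ (R⁻¹ • x)‖ * ‖R⁻¹ • ContinuousLinearMap.id ℝ E‖ := by
        rw [hderiv.fderiv]; exact ContinuousLinearMap.opNorm_comp_le _ _
    _ ≤ C * |R|⁻¹ := by
        gcongr
        · exact (norm_nonneg _).trans (hC 0)
        · exact hC _
        · refine (norm_smul_le (β := E →L[ℝ] E) _ _).trans ?_
          rw [norm_inv, Real.norm_eq_abs]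
          exact mul_le_of_le_one_right (by positivity) ContinuousLinearMap.norm_id_le

variable [MeasurableSpace E] {μ : Measure E}

theorem tendsto_integral_fderiv_cutoff_mul (v : E) {f : E → ℝ} (hf : Integrable f μ) :
    Tendsto (fun R => ∫ x, fderiv ℝ (cutoff R) x v * f x ∂μ) atTop (𝓝 0) := by
  obtain ⟨C, hC⟩ := exists_norm_fderiv_cutoff_le (E := E)
  have hbound : ∀ R, ‖∫ x, fderiv ℝ (cutoff R) x v * f x ∂μ‖
      ≤ C * |R|⁻¹ * ‖v‖ * ∫ x, ‖f x‖ ∂μ := by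
    intro R
    rw [← integral_const_mul]
    refine norm_integral_le_of_norm_le (hf.norm.const_mul _) (ae_of_all _ fun x => ?_)
    rw [norm_mul]
    gcongr
    exact (ContinuousLinearMap.le_opNorm _ _).trans (by gcongr; exact hC R x)
  refine squeeze_zero_norm hbound ?_
  have hinv : Tendsto (fun R : ℝ => |R|⁻¹) atTop (𝓝 0) :=
    tendsto_inv_atTop_zero.comp tendsto_abs_atTop_atTop
  simpa using ((hinv.const_mul C).mul_const ‖v‖).mul_const (∫ x, ‖f x‖ ∂μ)

variable [BorelSpace E]

theorem integrable_cutoff_mul [IsFiniteMeasureOnCompacts μ] {R : ℝ} (hR : R ≠ 0) {g : E → ℝ}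
    (hg : Continuous g) : Integrable (fun x => cutoff R x * g x) μ :=
  ((contDiff_cutoff R (n := 0)).continuous.mul hg).integrable_of_hasCompactSupport
    (hasCompactSupport_cutoff hR).mul_right

theorem integrable_fderiv_cutoff_mul [IsFiniteMeasureOnCompacts μ] {R : ℝ} (hR : R ≠ 0) (v : E)
    {g : E → ℝ} (hg : Continuous g) : Integrable (fun x => fderiv ℝ (cutoff R) x v * g x) μ :=
  ((((contDiff_cutoff R (n := 1)).continuous_fderiv one_ne_zero).clm_apply
    continuous_const).mul hg).integrable_of_hasCompactSupport
    (((hasCompactSupport_cutoff hR).fderiv ℝ).comp_left (g := fun T : E →L[ℝ] ℝ => T v)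
      rfl).mul_right

theorem integral_cutoff_mul_fderiv [μ.IsAddHaarMeasure] {R : ℝ} (hR : R ≠ 0) (v : E)
    {f : E → ℝ} (hf : ContDiff ℝ 1 f) :
    ∫ x, cutoff R x * fderiv ℝ f x v ∂μ = -∫ x, fderiv ℝ (cutoff R) x v * f x ∂μ :=
  integral_mul_fderiv_eq_neg_fderiv_mul_of_integrable
    (integrable_fderiv_cutoff_mul hR v hf.continuous)
    (integrable_cutoff_mul hR ((hf.continuous_fderiv one_ne_zero).clm_apply continuous_const))
    (integrable_cutoff_mul hR hf.continuous)
    (fun x _ => (contDiff_cutoff R (n := 1)).differentiable one_ne_zero x)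
    (fun x _ => hf.differentiable one_ne_zero x)

theorem tendsto_integral_cutoff_mul_fderiv [μ.IsAddHaarMeasure] (v : E) {f : E → ℝ}
    (hf : ContDiff ℝ 1 f) (hfi : Integrable f μ) :
    Tendsto (fun R => ∫ x, cutoff R x * fderiv ℝ f x v ∂μ) atTop (𝓝 0) := by
  have hneg := (tendsto_integral_fderiv_cutoff_mul v hfi).neg
  rw [neg_zero] at hneg
  refine hneg.congr' ?_
  filter_upwards [eventually_ne_atTop 0] with R hR
  exact (integral_cutoff_mul_fderiv hR v hf).symm

theorem tendsto_integral_cutoff_mul {g : E → ℝ} (hg : Integrable g μ) :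
    Tendsto (fun R => ∫ x, cutoff R x * g x ∂μ) atTop (𝓝 (∫ x, g x ∂μ)) := by
  refine tendsto_integral_filter_of_dominated_convergence (fun x => ‖g x‖)
    (.of_forall fun R => (contDiff_cutoff R (n := 0)).continuous.aestronglyMeasurable.mul
      hg.aestronglyMeasurable)
    (.of_forall fun R => ae_of_all _ fun x => ?_) hg.norm (ae_of_all _ fun x => ?_)
  · rw [norm_mul, norm_of_nonneg (cutoff_nonneg R x)]
    exact mul_le_of_le_one_left (norm_nonneg _) (cutoff_le_one R x)
  · refine tendsto_const_nhds.congr' ?_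
    filter_upwards [eventually_cutoff_eq_one x] with R hR
    rw [hR, one_mul]

theorem integral_sum_fderiv_eq_zero [μ.IsAddHaarMeasure] {ι : Type*} [Fintype ι]
    {f : ι → E → ℝ} (v : ι → E) (hf : ∀ j, ContDiff ℝ 1 (f j)) (hfi : ∀ j, Integrable (f j) μ)
    (hg : Integrable (fun x => ∑ j, fderiv ℝ (f j) x (v j)) μ) :
    ∫ x, ∑ j, fderiv ℝ (f j) x (v j) ∂μ = 0 := by
  refine tendsto_nhds_unique (tendsto_integral_cutoff_mul hg) ?_
  have hsum := tendsto_finsetSum Finset.univ fun j _ =>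
    tendsto_integral_cutoff_mul_fderiv (μ := μ) (v j) (hf j) (hfi j)
  rw [Finset.sum_const_zero] at hsum
  refine hsum.congr' ?_
  filter_upwards [eventually_ne_atTop 0] with R hR
  simp_rw [Finset.mul_sum]
  exact (integral_finsetSum _ fun j _ => integrable_cutoff_mul hR
    (((hf j).continuous_fderiv one_ne_zero).clm_apply continuous_const)).symm

end Cutoff

section Divergence

variable {ι : Type*} [Fintype ι] [DecidableEq ι]

noncomputable def divergence (u : EuclideanSpace ℝ ι → EuclideanSpace ℝ ι)
    (x : EuclideanSpace ℝ ι) : ℝ :=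
  ∑ j, fderiv ℝ (fun y => u y j) x (EuclideanSpace.single j 1)

theorem integral_divergence_eq_zero {μ : Measure (EuclideanSpace ℝ ι)} [μ.IsAddHaarMeasure]
    {u : EuclideanSpace ℝ ι → EuclideanSpace ℝ ι} (hu : ContDiff ℝ 1 u) (hui : Integrable u μ)
    (hdiv : Integrable (divergence u) μ) : ∫ x, divergence u x ∂μ = 0 :=
  integral_sum_fderiv_eq_zero _ (fun j => (EuclideanSpace.proj (𝕜 := ℝ) j).contDiff.comp hu)
    (fun j => (EuclideanSpace.proj (𝕜 := ℝ) j).integrable_comp hui) hdiv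

theorem divergence_coord_smul {u : EuclideanSpace ℝ ι → EuclideanSpace ℝ ι}
    {x : EuclideanSpace ℝ ι} (hu : DifferentiableAt ℝ u x) (i : ι) :
    divergence (fun y => y i • u y) x = x i * divergence u x + u x i := by
  have hprod (j : ι) : fderiv ℝ (fun y => y i * u y j) x (EuclideanSpace.single j 1)
      = x i * fderiv ℝ (fun y => u y j) x (EuclideanSpace.single j 1)
        + u x j * (EuclideanSpace.single j (1 : ℝ) : EuclideanSpace ℝ ι) i := by
    have hi : HasFDerivAt (fun y : EuclideanSpace ℝ ι => y i)
        (EuclideanSpace.proj (𝕜 := ℝ) i) x :=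
      (EuclideanSpace.proj (𝕜 := ℝ) i).hasFDerivAt
    have hj : DifferentiableAt ℝ (fun y => u y j) x :=
      (EuclideanSpace.proj (𝕜 := ℝ) j).differentiableAt.comp x hu
    rw [fderiv_fun_mul hi.differentiableAt hj, hi.fderiv]
    simp
  simp only [divergence, PiLp.smul_apply, smul_eq_mul, hprod, Finset.sum_add_distrib,
    Finset.mul_sum, PiLp.single_apply]
  simp

end Divergence

theorem stmt4 (w : EuclideanSpace ℝ (Fin 3) → EuclideanSpace ℝ (Fin 3))
    (hw : ContDiff ℝ 1 w)
    (hdiv : ∀ x, ∑ i, fderiv ℝ (fun y => w y i) x (EuclideanSpace.single i 1) = 0)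
    (hint : Integrable w)
    (hint1 : Integrable (fun x => ‖x‖ * ‖w x‖)) :
    ∀ i : Fin 3, ∫ x, w x i = 0 := by
  intro i
  set u := fun y : EuclideanSpace ℝ (Fin 3) => y i • w y
  have hu : ContDiff ℝ 1 u := (EuclideanSpace.proj (𝕜 := ℝ) i).contDiff.smul hw
  have hdiv_u : divergence u = fun x => w x i := funext fun x => by
    rw [divergence_coord_smul (hw.differentiable one_ne_zero x), divergence, hdiv x,
      mul_zero, zero_add]
  have hu_int : Integrable u := by
    refine hint1.mono' hu.continuous.aestronglyMeasurable (ae_of_all _ fun x => ?_)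
    rw [norm_smul]
    gcongr
    exact PiLp.norm_apply_le x i
  have hwi_int : Integrable (fun x => w x i) :=
    (EuclideanSpace.proj (𝕜 := ℝ) i).integrable_comp hint
  simpa only [hdiv_u] using integral_divergence_eq_zero hu hu_int (hdiv_u ▸ hwi_int)
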